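/- arXiv:math/0203021 — 2 statements merged into one kernel-verified Lean document; each statement's English description precedes it below -/
import Mathlib

section
/- Let F be a field of characteristic zero, N ≥ 1, and let k, n be natural numbers with 1 ≤ k < n. Then for a homogeneous polynomial f of degree n in F[X_0, …, X_N], one has ∂_0^{n−k} f = 0 if and only if f belongs to the ideal power 𝔪^{k+1}, where 𝔪 = (X_1, …, X_N). Equivalently, the kernel of the linear map ∂_0^{n−k} : S^n → S^k equals S^n ∩ 𝔪^{k+1}. -/
open MvPolynomial

/-- The ideal `𝔪 = (X 1, …, X N)` generated by the variables `X i` with `i ≠ 0`. -/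
noncomputable def mIdeal (F : Type*) [CommSemiring F] (N : ℕ) :
    Ideal (MvPolynomial (Fin (N + 1)) F) :=
  Ideal.span {p | ∃ i : Fin (N + 1), i ≠ 0 ∧ p = X i}

/-- The `m`-fold iterate of the partial derivative with respect to `X 0`,
as an `F`-linear endomorphism. -/
noncomputable def pd0pow (F : Type*) [CommSemiring F] (N : ℕ) (m : ℕ) :
    MvPolynomial (Fin (N + 1)) F →ₗ[F] MvPolynomial (Fin (N + 1)) F :=
  (pderiv (0 : Fin (N + 1))).toLinearMap ^ m

/-!
Both conditions are conditions on the support of `f`. The coefficient of `X^d` in `∂_0^r f` is a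
nonzero integer multiple of the coefficient of `X^(d + r e_0)` in `f`, so in characteristic zero
`∂_0^r f = 0` iff every exponent `d` in the support of `f` has `d 0 < r`. On the other hand
`𝔪^t` is a monomial ideal: `f ∈ 𝔪^t` iff every exponent `d` in the support of `f` has
`t ≤ d 1 + ⋯ + d N`. For `f` homogeneous of degree `n` these sum with `d 0` to `n`, and
`d 0 < n - k ↔ k + 1 ≤ n - d 0`.
-/

namespace Finsupp

variable {σ : Type*}

theorem degree_eq_apply_add_degree_filter_ne [DecidableEq σ] (d : σ →₀ ℕ) (i : σ) :
    d.degree = d i + (d.filter (· ≠ i)).degree := by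
  conv_lhs => rw [← filter_add_filter_not d (· = i)]
  rw [map_add, filter_eq', degree_single]

theorem exists_le_degree_eq_support_subset_iff (s : Set σ) [DecidablePred (· ∈ s)]
    (d : σ →₀ ℕ) (t : ℕ) :
    (∃ e ≤ d, e.degree = t ∧ ↑e.support ⊆ s) ↔ t ≤ (d.filter (· ∈ s)).degree := by
  constructor
  · rintro ⟨e, hed, rfl, hes⟩
    refine degree_mono fun i => ?_
    by_cases hi : i ∈ s
    · simpa [filter_apply, hi] using hed i
    · simpa [filter_apply, hi] using fun h => hi (hes h)
  · intro h
    obtain ⟨e, hed, rfl⟩ := exists_le_degree_eq _ t h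
    refine ⟨e, fun i => (hed i).trans ?_, rfl, fun i hi => ?_⟩
    · rw [filter_apply]; split_ifs <;> simp
    · by_contra his
      simpa [filter_apply, his] using support_mono hed hi

end Finsupp

namespace MvPolynomial

open Finsupp

variable {σ R : Type*} [CommSemiring R]

theorem coeff_iterate_pderiv (i : σ) (r : ℕ) (p : MvPolynomial σ R) (m : σ →₀ ℕ) :
    coeff m ((pderiv i)^[r] p) = (m i + r).descFactorial r * coeff (m + single i r) p := by
  induction r generalizing p with
  | zero => simp
  | succ r ih =>
    rw [Function.iterate_succ_apply, ih, coeff_pderiv, add_assoc, ← single_add,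
      Finsupp.add_apply, single_eq_same, ← add_assoc, Nat.succ_descFactorial_succ]
    push_cast
    ring

theorem iterate_pderiv_eq_zero_iff [NoZeroDivisors R] [CharZero R] (i : σ) (r : ℕ)
    (p : MvPolynomial σ R) : (pderiv i)^[r] p = 0 ↔ ∀ d ∈ p.support, d i < r := by
  classical
  constructor
  · intro h d hd
    by_contra! hrd
    have hd' : d - single i r + single i r = d := tsub_add_cancel_of_le (single_le_iff.mpr hrd)
    have := congrArg (coeff (d - single i r)) h
    rw [coeff_iterate_pderiv, hd', coeff_zero, mul_eq_zero, Nat.cast_eq_zero,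
      Nat.descFactorial_eq_zero_iff_lt] at this
    exact this.elim (by omega) (mem_support_iff.mp hd)
  · intro h
    ext m
    rw [coeff_iterate_pderiv, coeff_zero, notMem_support_iff.mp, mul_zero]
    intro hm
    simpa using h _ hm

theorem span_X_image_pow (s : Set σ) (t : ℕ) :
    Ideal.span (X '' s) ^ t =
      Ideal.span ((monomial · (1 : R)) '' {x | x.degree = t ∧ ↑x.support ⊆ s}) := by
  rw [Ideal.span, Submodule.span_pow, image_pow_eq_finsuppProd_image]
  simp [monomial_eq]

theorem mem_span_X_image_pow_iff (s : Set σ) [DecidablePred (· ∈ s)] (t : ℕ)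
    (p : MvPolynomial σ R) :
    p ∈ Ideal.span (X '' s) ^ t ↔ ∀ d ∈ p.support, t ≤ (d.filter (· ∈ s)).degree := by
  rw [span_X_image_pow, mem_ideal_span_monomial_image]
  refine forall₂_congr fun d _ => ?_
  rw [← exists_le_degree_eq_support_subset_iff]
  exact exists_congr fun e => by rw [Set.mem_ofPred_eq]; tauto

end MvPolynomial

theorem mIdeal_eq_span_X_image (F : Type*) [CommSemiring F] (N : ℕ) :
    mIdeal F N = Ideal.span (X '' {i | i ≠ 0}) := by
  rw [mIdeal]
  congr 1
  ext p
  simp [eq_comm]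

theorem pd0pow_apply (F : Type*) [CommSemiring F] (N m : ℕ) (f : MvPolynomial (Fin (N + 1)) F) :
    pd0pow F N m f = (pderiv 0)^[m] f := by
  rw [pd0pow, Module.End.pow_apply]
  rfl

theorem stmt_5_general {F : Type*} [Field F] [CharZero F] {N : ℕ} (k n : ℕ) :
    ∀ f ∈ homogeneousSubmodule (Fin (N + 1)) F n,
      pd0pow F N (n - k) f = 0 ↔ f ∈ (mIdeal F N) ^ (k + 1) := by
  intro f hf
  rw [pd0pow_apply, iterate_pderiv_eq_zero_iff, mIdeal_eq_span_X_image,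
    mem_span_X_image_pow_iff]
  refine forall₂_congr fun d hd => ?_
  have hdeg : d.degree = n := by
    rw [Finsupp.degree_apply, ((mem_homogeneousSubmodule n f).mp hf).degree_eq_sum_deg_support hd]
  rw [Finsupp.degree_eq_apply_add_degree_filter_ne d 0] at hdeg
  simp only [Set.mem_ofPred_eq]
  omega

theorem stmt_5 {F : Type*} [Field F] [CharZero F] {N : ℕ} (hN : 1 ≤ N)
    (k n : ℕ) (hk : 1 ≤ k) (hkn : k < n) :
    ∀ f ∈ homogeneousSubmodule (Fin (N + 1)) F n,
      pd0pow F N (n - k) f = 0 ↔ f ∈ (mIdeal F N) ^ (k + 1) :=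
  stmt_5_general k n
end

section
/- Let F be a field of characteristic zero, N ≥ 1, and let k, n be natural numbers with 1 ≤ k < n. Let M be an (N+1)×(N+1) matrix over F with M i 0 = 0 for all i ≠ 0, and set a = M 0 0. Then for every homogeneous polynomial f of degree n in F[X_0, …, X_N], ∂_0^{n−k}(σ_M f) = a^{n−k} • σ_M(∂_0^{n−k} f); moreover σ_M maps S^n ∩ 𝔪^{k+1} into S^n ∩ 𝔪^{k+1} whenever M defines a degree-preserving substitution, so the map induced by ∂_0^{n−k} on the quotient S^n / (S^n ∩ 𝔪^{k+1}) intertwines the substitution action of M up to the scalar a^{n−k}. -/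
open MvPolynomial

/-- The linear substitution of variables given by the matrix `M`:
the `F`-algebra homomorphism with `X j ↦ ∑ i, M j i • X i`. -/
noncomputable def matrixSubst {F : Type*} [CommSemiring F] {N : ℕ}
    (M : Matrix (Fin (N + 1)) (Fin (N + 1)) F) :
    MvPolynomial (Fin (N + 1)) F →ₐ[F] MvPolynomial (Fin (N + 1)) F :=
  aeval fun j => ∑ i, C (M j i) * X i

lemma pderiv_matrixSubst_X {F : Type*} [CommRing F] {N : ℕ}
    (M : Matrix (Fin (N + 1)) (Fin (N + 1)) F)
    (hM : ∀ i : Fin (N + 1), i ≠ 0 → M i 0 = 0) (i : Fin (N + 1)) :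
    pderiv (0 : Fin (N + 1)) (matrixSubst M (X i)) = C (M i 0) := by
  simp only [matrixSubst, aeval_X, map_sum, pderiv_mul, pderiv_C, pderiv_X]
  rw [Finset.sum_eq_single (0 : Fin (N + 1))] <;>
    simp +contextual [Pi.single_apply, eq_comm]

lemma pderiv_matrixSubst {F : Type*} [CommRing F] {N : ℕ}
    (M : Matrix (Fin (N + 1)) (Fin (N + 1)) F)
    (hM : ∀ i : Fin (N + 1), i ≠ 0 → M i 0 = 0) (f : MvPolynomial (Fin (N + 1)) F) :
    pderiv (0 : Fin (N + 1)) (matrixSubst M f) =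
      C (M 0 0) * matrixSubst M (pderiv (0 : Fin (N + 1)) f) := by
  induction f using MvPolynomial.induction_on with
  | C a => simp [matrixSubst]
  | add p q hp hq => simp [map_add, hp, hq]; ring
  | mul_X p i hp =>
      rw [map_mul, pderiv_mul, hp, pderiv_mul, map_add, map_mul, map_mul,
        pderiv_matrixSubst_X M hM, pderiv_X]
      rcases eq_or_ne i 0 with rfl | hi
      · simp; ring
      · simp [hM i hi, Pi.single_apply, hi.symm]; ring

lemma pd0pow_matrixSubst {F : Type*} [CommRing F] {N : ℕ}
    (M : Matrix (Fin (N + 1)) (Fin (N + 1)) F)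
    (hM : ∀ i : Fin (N + 1), i ≠ 0 → M i 0 = 0) (m : ℕ) (f : MvPolynomial (Fin (N + 1)) F) :
    pd0pow F N m (matrixSubst M f) = (M 0 0) ^ m • matrixSubst M (pd0pow F N m f) := by
  induction m with
  | zero => simp [pd0pow]
  | succ m ih =>
      have h1 : ∀ g, pd0pow F N (m + 1) g = pderiv (0 : Fin (N+1)) (pd0pow F N m g) := by
        intro g; rw [pd0pow, pd0pow, pow_succ', Module.End.mul_apply]; rfl
      rw [h1, h1, ih, Derivation.map_smul, pderiv_matrixSubst M hM,
        ← smul_eq_C_mul, smul_smul, ← pow_succ]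

theorem stmt_13 {F : Type*} [Field F] [CharZero F] {N : ℕ} (hN : 1 ≤ N)
    (k n : ℕ) (hk : 1 ≤ k) (hkn : k < n)
    (M : Matrix (Fin (N + 1)) (Fin (N + 1)) F)
    (hM : ∀ i : Fin (N + 1), i ≠ 0 → M i 0 = 0) :
    (∀ f ∈ homogeneousSubmodule (Fin (N + 1)) F n,
        pd0pow F N (n - k) (matrixSubst M f) =
          (M 0 0) ^ (n - k) • matrixSubst M (pd0pow F N (n - k) f)) ∧
    ∀ f ∈ homogeneousSubmodule (Fin (N + 1)) F n ⊓
        Submodule.restrictScalars F ((mIdeal F N) ^ (k + 1)),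
      matrixSubst M f ∈ homogeneousSubmodule (Fin (N + 1)) F n ⊓
        Submodule.restrictScalars F ((mIdeal F N) ^ (k + 1)) := by
  constructor
  · intro f _; exact pd0pow_matrixSubst M hM _ f
  · intro f hf
    rw [Submodule.mem_inf] at hf ⊢
    obtain ⟨hf1, hf2⟩ := hf
    rw [Submodule.restrictScalars_mem] at hf2 ⊢
    constructor
    · rw [mem_homogeneousSubmodule] at hf1 ⊢
      have := hf1.aeval (fun j => ∑ i, C (M j i) * X i) (fun j => by
        apply IsHomogeneous.sum
        intro i _
        simpa using (isHomogeneous_X F i).C_mul (M j i))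
      simpa [matrixSubst] using this
    · have hmap : Ideal.map (matrixSubst M).toRingHom (mIdeal F N) ≤ mIdeal F N := by
        rw [Ideal.map_le_iff_le_comap, mIdeal, Ideal.span_le]
        rintro p ⟨i, hi, rfl⟩
        simp only [SetLike.mem_coe, Ideal.mem_comap, AlgHom.toRingHom_eq_coe,
          RingHom.coe_coe, matrixSubst, aeval_X]
        rw [Finset.sum_eq_sum_sdiff_singleton_add (Finset.mem_univ (0 : Fin (N+1))),
          hM i hi]
        simp only [map_zero, zero_mul, add_zero]
        apply Ideal.sum_mem
        intro j hj
        apply Ideal.mul_mem_left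
        apply Ideal.subset_span
        exact ⟨j, by simpa using (Finset.mem_sdiff.mp hj).2, rfl⟩
      have : matrixSubst M f ∈ Ideal.map (matrixSubst M).toRingHom ((mIdeal F N) ^ (k+1)) :=
        Ideal.mem_map_of_mem _ hf2
      rw [Ideal.map_pow] at this
      exact pow_le_pow_left' hmap (k+1) this
end
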